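/- arXiv:2409.20051 — 6 statements merged into one kernel-verified Lean document; each statement's English description precedes it below -/
import Mathlib

section
/- Let σ : Sym⁺⁺(3) → Sym(3) be isotropic (σ(Q B Qᵀ) = Q σ(B) Qᵀ for all Q ∈ O(3) and B ∈ Sym⁺⁺(3)) and Fréchet differentiable at B ∈ Sym⁺⁺(3), with derivative Dσ(B) : Sym(3) → Sym(3). Then for every skew-symmetric 3×3 real matrix Ω one has Ω σ(B) − σ(B) Ω = Dσ(B).(Ω B − B Ω). -/
open Matrix

noncomputable section

abbrev M3 := Matrix (Fin 3) (Fin 3) ℝ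

attribute [local instance] Matrix.frobeniusNormedAddCommGroup Matrix.frobeniusNormedSpace

/-! The one-parameter subgroup `Q t = exp (t Ω)` generated by a skew-symmetric `Ω` is a curve of
orthogonal matrices through `1` with velocity `Ω`, so `t ↦ Q t B Q tᵀ` stays in `Sym⁺⁺` and passes
through `B` with velocity `Ω B - B Ω`. Isotropy turns `σ` of this curve into `t ↦ Q t σ(B) Q tᵀ`,
whose velocity is `Ω σ(B) - σ(B) Ω`; the chain rule computes the same velocity as
`Dσ(B).(Ω B - B Ω)`. -/

attribute [local instance] Matrix.frobeniusNormedRing Matrix.frobeniusNormedAlgebra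

open NormedSpace

namespace Matrix

variable {n : Type*} [Fintype n] [DecidableEq n]

lemma PosDef.mul_mul_transpose_of_transpose_mul_self_eq_one {Q B : Matrix n n ℝ}
    (hB : B.PosDef) (hQ : Qᵀ * Q = 1) : (Q * B * Qᵀ).PosDef := by
  have hQ' : Q * Qᵀ = 1 := mul_eq_one_comm.mp hQ
  have hinj : Function.Injective Q.vecMul := fun x y hxy => by
    simpa [vecMul_vecMul, hQ'] using congrArg (· ᵥ* Qᵀ) hxy
  simpa [conjTranspose_eq_transpose_of_trivial] using hB.mul_mul_conjTranspose_same hinj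

lemma transpose_exp_mul_exp_of_transpose_eq_neg {Ω : Matrix n n ℝ} (hΩ : Ωᵀ = -Ω) :
    (exp Ω)ᵀ * exp Ω = 1 := by
  rw [← exp_transpose, hΩ, ← exp_add_of_commute _ _ (Commute.refl Ω).neg_left, neg_add_cancel,
    exp_zero]

lemma hasDerivAt_exp_smul_mul_mul_transpose (Ω X : Matrix n n ℝ) :
    HasDerivAt (fun t : ℝ => exp (t • Ω) * X * (exp (t • Ω))ᵀ) (Ω * X + X * Ωᵀ) 0 := by
  have hexp : HasDerivAt (fun t : ℝ => exp (t • Ω)) (exp ((0 : ℝ) • Ω) * Ω) 0 :=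
    hasDerivAt_exp_smul_const Ω 0
  have hexpT : HasDerivAt (fun t : ℝ => exp (t • Ωᵀ)) (exp ((0 : ℝ) • Ωᵀ) * Ωᵀ) 0 :=
    hasDerivAt_exp_smul_const Ωᵀ 0
  simp only [← transpose_smul, exp_transpose] at hexpT
  have h := (hexp.mul_const X).mul hexpT
  simp only [zero_smul, exp_zero, one_mul, transpose_one, mul_one] at h
  exact h

end Matrix

theorem isotropic_commutator_identity_general
    (σ : M3 → M3)
    (hiso : ∀ (Q B : M3), Qᵀ * Q = 1 → B.PosDef → σ (Q * B * Qᵀ) = Q * σ B * Qᵀ)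
    (B : M3) (hB : B.PosDef)
    (T : M3 →L[ℝ] M3)
    (hT : HasFDerivWithinAt σ T {X : M3 | X.PosDef} B)
    (Ω : M3) (hΩ : Ωᵀ = -Ω) :
    Ω * σ B - σ B * Ω = T (Ω * B - B * Ω) := by
  set Q : ℝ → M3 := fun t => exp (t • Ω)
  have hQ : ∀ t, (Q t)ᵀ * Q t = 1 := fun t =>
    transpose_exp_mul_exp_of_transpose_eq_neg (by rw [transpose_smul, hΩ, smul_neg])
  have horbit := hasDerivAt_exp_smul_mul_mul_transpose Ω B
  have hσorbit := hasDerivAt_exp_smul_mul_mul_transpose Ω (σ B)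
  rw [hΩ, mul_neg, ← sub_eq_add_neg] at horbit hσorbit
  have hchain : HasDerivAt (fun t => σ (Q t * B * (Q t)ᵀ)) (T (Ω * B - B * Ω)) 0 := by
    have hT0 : HasFDerivWithinAt σ T {X : M3 | X.PosDef} (Q 0 * B * (Q 0)ᵀ) := by
      simpa [Q] using hT
    exact hasDerivWithinAt_univ.mp <| hT0.comp_hasDerivWithinAt (x := (0 : ℝ))
      horbit.hasDerivWithinAt fun t _ => hB.mul_mul_transpose_of_transpose_mul_self_eq_one (hQ t)
  simp only [hiso _ B (hQ _) hB] at hchain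
  exact hσorbit.unique hchain

/-- For an isotropic map `σ : Sym⁺⁺(3) → Sym(3)` which is Fréchet
differentiable at `B ∈ Sym⁺⁺(3)` with derivative `T`, and any skew-symmetric `Ω`,
one has `Ω σ(B) − σ(B) Ω = Dσ(B).(Ω B − B Ω)`. -/
theorem isotropic_commutator_identity
    (σ : M3 → M3)
    (hmaps : ∀ B : M3, B.PosDef → (σ B).IsSymm)
    (hiso : ∀ (Q B : M3), Qᵀ * Q = 1 → B.PosDef → σ (Q * B * Qᵀ) = Q * σ B * Qᵀ)
    (B : M3) (hB : B.PosDef)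
    (T : M3 →L[ℝ] M3)
    (hT : HasFDerivWithinAt σ T {X : M3 | X.PosDef} B)
    (Ω : M3) (hΩ : Ωᵀ = -Ω) :
    Ω * σ B - σ B * Ω = T (Ω * B - B * Ω) :=
  isotropic_commutator_identity_general σ hiso B hB T hT Ω hΩ
end
end

section
/- Let σ : Sym⁺⁺(3) → Sym(3) be isotropic and Fréchet differentiable, let B : ℝ → Sym⁺⁺(3) be differentiable at t₀, and let Ω be a skew-symmetric 3×3 real matrix. Writing B₀ = B(t₀) and B' = (d/dt)B(t)|_{t₀}, the corotational rate of σ along B satisfies the chain rule: (d/dt)[σ(B(t))]|_{t₀} − Ω σ(B₀) + σ(B₀) Ω = Dσ(B₀).(B' − Ω B₀ + B₀ Ω). -/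
/-!
Differentiating the isotropy identity `σ (Q s * B₀ * (Q s)ᵀ) = Q s * σ B₀ * (Q s)ᵀ` along the
rotations `Q s = exp (s • Ω)` at `s = 0` gives `Dσ(B₀) (Ω B₀ - B₀ Ω) = Ω σ(B₀) - σ(B₀) Ω`.
Subtracting this from the ordinary chain rule `d/dt σ(B t) = Dσ(B₀) B'` gives the corotational
chain rule.
-/

open Matrix

noncomputable section

attribute [local instance] Matrix.frobeniusNormedAddCommGroup Matrix.frobeniusNormedSpace

open NormedSpace

attribute [local instance] Matrix.frobeniusNormedRing Matrix.frobeniusNormedAlgebra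

section

variable {n : Type*} [Fintype n] [DecidableEq n]

theorem Matrix.PosDef.mul_mul_transpose_of_transpose_mul_eq_one {X Q : Matrix n n ℝ}
    (hX : X.PosDef) (hQ : Qᵀ * Q = 1) : (Q * X * Qᵀ).PosDef :=
  hX.mul_mul_conjTranspose_same (vecMul_injective_of_isUnit (.of_mul_eq_one_right Qᵀ hQ))

theorem Matrix.transpose_exp_mul_exp_of_transpose_eq_neg_s1 {Ω : Matrix n n ℝ} (hΩ : Ωᵀ = -Ω) :
    (exp Ω)ᵀ * exp Ω = 1 :=
  Unitary.star_mul_self_of_mem <|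
    exp_mem_unitary_of_mem_skewAdjoint (skewAdjoint.mem_iff.mpr hΩ)

theorem Matrix.hasDerivAt_exp_smul_mul_mul_transpose_s1 (Ω A : Matrix n n ℝ) :
    HasDerivAt (fun s : ℝ => exp (s • Ω) * A * (exp (s • Ω))ᵀ) (Ω * A + A * Ωᵀ) 0 := by
  have hexp : HasDerivAt (fun s : ℝ => exp (s • Ω)) Ω 0 := by
    have h := hasDerivAt_exp_smul_const (𝕂 := ℝ) Ω 0
    rwa [zero_smul, exp_zero, one_mul] at h
  have hexpT : HasDerivAt (fun s : ℝ => (exp (s • Ω))ᵀ) Ωᵀ 0 := by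
    have h := hasDerivAt_exp_smul_const (𝕂 := ℝ) Ωᵀ 0
    rw [zero_smul, exp_zero, one_mul] at h
    have hfun : (fun s : ℝ => (exp (s • Ω))ᵀ) = fun s => exp (s • Ωᵀ) := by
      ext1 s
      rw [← exp_transpose, transpose_smul]
    rwa [hfun]
  have h := (hexp.mul_const A).mul hexpT
  simp only [exp_zero, zero_smul, one_mul, transpose_one, mul_one] at h
  exact h

theorem Matrix.isotropic_fderiv_apply_commutator {σ : Matrix n n ℝ → Matrix n n ℝ}
    {T : Matrix n n ℝ →L[ℝ] Matrix n n ℝ} {X : Matrix n n ℝ}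
    (hT : HasFDerivWithinAt σ T {Y | Y.PosDef} X) (hX : X.PosDef)
    (hiso : ∀ Q : Matrix n n ℝ, Qᵀ * Q = 1 → σ (Q * X * Qᵀ) = Q * σ X * Qᵀ)
    {Ω : Matrix n n ℝ} (hΩ : Ωᵀ = -Ω) :
    T (Ω * X - X * Ω) = Ω * σ X - σ X * Ω := by
  have horth (s : ℝ) : (exp (s • Ω))ᵀ * exp (s • Ω) = 1 :=
    transpose_exp_mul_exp_of_transpose_eq_neg_s1 (by rw [transpose_smul, hΩ, smul_neg])
  have hσcurve : HasDerivAt (fun s : ℝ => σ (exp (s • Ω) * X * (exp (s • Ω))ᵀ))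
      (T (Ω * X + X * Ωᵀ)) 0 :=
    hasDerivWithinAt_univ.mp <| hT.comp_hasDerivWithinAt_of_eq 0
      (hasDerivAt_exp_smul_mul_mul_transpose_s1 Ω X).hasDerivWithinAt
      (fun s _ => hX.mul_mul_transpose_of_transpose_mul_eq_one (horth s)) (by simp)
  simp only [hiso _ (horth _)] at hσcurve
  simpa only [hΩ, mul_neg, ← sub_eq_add_neg] using
    hσcurve.unique (hasDerivAt_exp_smul_mul_mul_transpose_s1 Ω (σ X))

end

theorem corotational_chain_rule_general
    (σ : M3 → M3)
    (hiso : ∀ (Q X : M3), Qᵀ * Q = 1 → X.PosDef → σ (Q * X * Qᵀ) = Q * σ X * Qᵀ)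
    (B : ℝ → M3) (hBpos : ∀ t, (B t).PosDef)
    (t₀ : ℝ) (B' : M3) (hB : HasDerivAt B B' t₀)
    (Ω : M3) (hΩ : Ωᵀ = -Ω)
    (T : M3 →L[ℝ] M3)
    (hT : HasFDerivWithinAt σ T {X : M3 | X.PosDef} (B t₀)) :
    HasDerivAt (fun t => σ (B t))
      (T (B' - Ω * B t₀ + B t₀ * Ω) + Ω * σ (B t₀) - σ (B t₀) * Ω) t₀ := by
  have hchain : HasDerivAt (fun t => σ (B t)) (T B') t₀ :=
    hasDerivWithinAt_univ.mp <| hT.comp_hasDerivWithinAt t₀ hB.hasDerivWithinAt fun t _ => hBpos t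
  have hcomm := isotropic_fderiv_apply_commutator hT (hBpos t₀)
    (fun Q hQ => hiso Q _ hQ (hBpos t₀)) hΩ
  convert hchain using 1
  rw [show B' - Ω * B t₀ + B t₀ * Ω = B' - (Ω * B t₀ - B t₀ * Ω) by abel, map_sub, hcomm]
  abel

/-- Chain rule for an arbitrary corotational rate: for an isotropic,
Fréchet differentiable `σ : Sym⁺⁺(3) → Sym(3)`, a differentiable curve `B` of positive
definite symmetric matrices and a skew-symmetric spin `Ω`,
`(d/dt)[σ(B(t))] − Ω σ(B₀) + σ(B₀) Ω = Dσ(B₀).(B' − Ω B₀ + B₀ Ω)`. -/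
theorem corotational_chain_rule
    (σ : M3 → M3)
    (hmaps : ∀ X : M3, X.PosDef → (σ X).IsSymm)
    (hiso : ∀ (Q X : M3), Qᵀ * Q = 1 → X.PosDef → σ (Q * X * Qᵀ) = Q * σ X * Qᵀ)
    (B : ℝ → M3) (hBpos : ∀ t, (B t).PosDef)
    (t₀ : ℝ) (B' : M3) (hB : HasDerivAt B B' t₀)
    (Ω : M3) (hΩ : Ωᵀ = -Ω)
    (T : M3 →L[ℝ] M3)
    (hT : HasFDerivWithinAt σ T {X : M3 | X.PosDef} (B t₀)) :
    HasDerivAt (fun t => σ (B t))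
      (T (B' - Ω * B t₀ + B t₀ * Ω) + Ω * σ (B t₀) - σ (B t₀) * Ω) t₀ :=
  corotational_chain_rule_general σ hiso B hBpos t₀ B' hB Ω hΩ T hT
end
end

section
/- Let V : ℝ → Sym⁺⁺(3) and R : ℝ → O(3) be differentiable at t₀, and set F(t) = V(t) R(t). With L = F'(t₀) F(t₀)⁻¹, D = sym L, Ω = R'(t₀) R(t₀)ᵀ, and B = V(t₀)², one has the identity L B + B Lᵀ − Ω B + B Ω = 2 V(t₀) D V(t₀). -/
open Matrix

noncomputable section

attribute [local instance] Matrix.frobeniusNormedAddCommGroup Matrix.frobeniusNormedSpace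

/-!
Write `A = V t₀`, `Q = R t₀`, `W = V'`. The product rule and `F⁻¹ = Qᵀ A⁻¹` give
`L A = W + A Ω`, and transposing, `A Lᵀ = W - Ω A`, because `A` and `W` are symmetric (the latter
as the derivative of a path of symmetric matrices) and `Ω` is skew (differentiate `R Rᵀ = 1`).
Substituting these two expressions, both sides of the identity become `W A + A W + A² Ω - Ω A²`.
-/

attribute [local instance] Matrix.frobeniusNormedRing Matrix.frobeniusNormedAlgebra

namespace Matrix

variable {n : Type*} [Fintype n]

section Algebra

variable {K : Type*} [CommRing K]

theorem mul_add_mul_transpose_sub_add_eq {A W Ω L : Matrix n n K} (hA : A.IsSymm) (hW : W.IsSymm)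
    (hΩ : Ωᵀ = -Ω) (hLA : L * A = W + A * Ω) :
    L * (A * A) + A * A * Lᵀ - Ω * (A * A) + A * A * Ω = A * (L + Lᵀ) * A := by
  have hALt : A * Lᵀ = W - Ω * A := by
    rw [← hA.eq, ← transpose_mul, hA.eq, hLA, transpose_add, transpose_mul, hΩ, hA.eq, hW.eq,
      Matrix.neg_mul, sub_eq_add_neg]
  calc L * (A * A) + A * A * Lᵀ - Ω * (A * A) + A * A * Ω
      = L * A * A + A * (A * Lᵀ) - Ω * (A * A) + A * A * Ω := by
        simp only [Matrix.mul_assoc]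
    _ = A * (L * A) + A * Lᵀ * A := by rw [hLA, hALt]; noncomm_ring
    _ = A * (L + Lᵀ) * A := by simp only [Matrix.mul_add, Matrix.add_mul, Matrix.mul_assoc]

variable [DecidableEq n]

theorem mul_inv_mul_of_mul_transpose_eq_one {A Q W R' : Matrix n n K} (hA : IsUnit A.det)
    (hQ : Q * Qᵀ = 1) : (W * Q + A * R') * (A * Q)⁻¹ * A = W + A * (R' * Qᵀ) := by
  rw [mul_inv_rev, inv_eq_right_inv hQ, Matrix.mul_assoc, Matrix.mul_assoc, nonsing_inv_mul A hA,
    Matrix.mul_one, Matrix.add_mul]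
  simp only [Matrix.mul_assoc, hQ, Matrix.mul_one]

end Algebra

section Calculus

theorem _root_.HasDerivAt.matrix_transpose {m : Type*} [Fintype m] {f : ℝ → Matrix m n ℝ}
    {f' : Matrix m n ℝ} {t : ℝ} (hf : HasDerivAt f f' t) :
    HasDerivAt (fun s => (f s)ᵀ) f'ᵀ t :=
  (transposeLinearEquiv m n ℝ ℝ).toLinearMap.toContinuousLinearMap.hasFDerivAt.comp_hasDerivAt t hf

theorem _root_.HasDerivAt.isSymm_of_forall_isSymm {f : ℝ → Matrix n n ℝ} {f' : Matrix n n ℝ}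
    {t : ℝ} (hsymm : ∀ s, (f s).IsSymm) (hf : HasDerivAt f f' t) : f'.IsSymm :=
  hf.matrix_transpose.unique <| by rwa [funext fun s => (hsymm s).eq]

variable [DecidableEq n]

theorem _root_.HasDerivAt.mul_transpose_skew_of_orthogonal {R : ℝ → Matrix n n ℝ}
    {R' : Matrix n n ℝ} {t : ℝ} (horth : ∀ s, (R s)ᵀ * R s = 1) (hR : HasDerivAt R R' t) :
    (R' * (R t)ᵀ)ᵀ = -(R' * (R t)ᵀ) := by
  have hconst : HasDerivAt (fun s => R s * (R s)ᵀ) 0 t := by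
    rw [funext fun s => mul_eq_one_comm.mp (horth s)]
    exact hasDerivAt_const t 1
  have hsum : R' * (R t)ᵀ + R t * R'ᵀ = 0 := (hR.mul hR.matrix_transpose).unique hconst
  rw [transpose_mul, transpose_transpose, eq_neg_of_add_eq_zero_right hsum]

end Calculus

end Matrix

/-- For the left polar decomposition `F = V R` with `V` positive definite
symmetric and `R` orthogonal, with `L = F' F⁻¹`, `D = sym L`, `Ω = R' Rᵀ` and `B = V²`,
one has `L B + B Lᵀ − Ω B + B Ω = 2 V D V`. -/
theorem polar_rate_identity
    (V : ℝ → M3) (hVpos : ∀ t, (V t).PosDef)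
    (R : ℝ → M3) (hRorth : ∀ t, (R t)ᵀ * R t = 1)
    (t₀ : ℝ) (V' R' F' : M3)
    (hV : HasDerivAt V V' t₀) (hR : HasDerivAt R R' t₀)
    (hF : HasDerivAt (fun t => V t * R t) F' t₀)
    (L D Ω B : M3)
    (hL : L = F' * (V t₀ * R t₀)⁻¹)
    (hD : D = (1 / 2 : ℝ) • (L + Lᵀ))
    (hΩ : Ω = R' * (R t₀)ᵀ)
    (hB : B = V t₀ * V t₀) :
    L * B + B * Lᵀ - Ω * B + B * Ω = (2 : ℝ) • (V t₀ * D * V t₀) := by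
  have hVsymm : ∀ t, (V t).IsSymm := fun t => isHermitian_iff_isSymm.mp (hVpos t).isHermitian
  have hF' : F' = V' * R t₀ + V t₀ * R' := ((hV.mul hR).unique hF).symm
  have hLV : L * V t₀ = V' + V t₀ * Ω := by
    rw [hL, hF', hΩ]
    exact mul_inv_mul_of_mul_transpose_eq_one
      ((isUnit_iff_isUnit_det _).mp (hVpos t₀).isUnit) (mul_eq_one_comm.mp (hRorth t₀))
  have hΩskew : Ωᵀ = -Ω := hΩ ▸ hR.mul_transpose_skew_of_orthogonal hRorth
  rw [hB, mul_add_mul_transpose_sub_add_eq (hVsymm t₀) (hV.isSymm_of_forall_isSymm hVsymm) hΩskew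
    hLV, hD, Matrix.mul_smul, Matrix.smul_mul, smul_smul]
  norm_num
end
end

section
/- The matrix logarithm is strictly Hilbert-monotone: for all B₁, B₂ ∈ Sym⁺⁺(3) with B₁ ≠ B₂ one has ⟨log B₁ − log B₂, B₁ − B₂⟩ > 0, where ⟨X,Y⟩ = tr(X Yᵀ) is the Frobenius inner product. -/
open Matrix

noncomputable section

/-!
Diagonalize `X₁ = U diag(x) Uᵀ` and `X₂ = V diag(y) Vᵀ` with `U, V` orthogonal and put
`W = Uᵀ V`. Since every row and column of `(Wᵢⱼ²)` sums to one, for all `f, g : ℝ → ℝ`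
`tr ((f X₁ - f X₂) (g X₁ - g X₂)) = ∑ᵢⱼ (f xᵢ - f yⱼ) (g xᵢ - g yⱼ) Wᵢⱼ²`.
For `f = id`, `g = exp` every term is nonnegative because `exp` is increasing. For
`f = g = id` the sum is the squared Frobenius norm of `X₁ - X₂ ≠ 0`, which yields a pair
`i, j` with `xᵢ ≠ yⱼ` and `Wᵢⱼ ≠ 0`, whose term is then strictly positive.
-/

section OrderedRing

variable {α : Type*} [CommRing α] [LinearOrder α] [IsStrictOrderedRing α]

lemma Monotone.sub_mul_sub_nonneg {g : α → α} (hg : Monotone g) (x y : α) :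
    0 ≤ (x - y) * (g x - g y) := by
  rcases le_total x y with h | h
  · exact mul_nonneg_of_nonpos_of_nonpos (sub_nonpos.2 h) (sub_nonpos.2 (hg h))
  · exact mul_nonneg (sub_nonneg.2 h) (sub_nonneg.2 (hg h))

lemma StrictMono.sub_mul_sub_pos {g : α → α} (hg : StrictMono g) {x y : α} (hxy : x ≠ y) :
    0 < (x - y) * (g x - g y) := by
  rcases hxy.lt_or_gt with h | h
  · exact mul_pos_of_neg_of_neg (sub_neg.2 h) (sub_neg.2 (hg h))
  · exact mul_pos (sub_pos.2 h) (sub_pos.2 (hg h))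

lemma StrictMono.sum_sub_mul_sub_pos {ι κ : Type*} [Fintype ι] [Fintype κ] {g : α → α}
    (hg : StrictMono g) (x : ι → α) (y : κ → α) {w : ι → κ → α} (hw : ∀ i j, 0 ≤ w i j)
    (h : ∑ i, ∑ j, (x i - y j) * (x i - y j) * w i j ≠ 0) :
    0 < ∑ i, ∑ j, (x i - y j) * (g (x i) - g (y j)) * w i j := by
  simp only [← Fintype.sum_prod_type'] at h ⊢
  obtain ⟨⟨i, j⟩, -, hij⟩ := Finset.exists_ne_zero_of_sum_ne_zero h
  have hxy : x i ≠ y j := fun h => hij (by simp [h])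
  have hwij : 0 < w i j := (hw i j).lt_of_ne fun h => hij (by simp [← h])
  exact Finset.sum_pos' (fun p _ => mul_nonneg (hg.monotone.sub_mul_sub_nonneg _ _) (hw _ _))
    ⟨(i, j), Finset.mem_univ _, mul_pos (hg.sub_mul_sub_pos hxy) hwij⟩

end OrderedRing

namespace Matrix

variable {n R : Type*} [Fintype n] [DecidableEq n] [CommRing R]

lemma trace_conj_diagonal_mul_conj_diagonal (U V : Matrix n n R) (a b : n → R) :
    trace (U * diagonal a * Uᵀ * (V * diagonal b * Vᵀ)) =
      ∑ i, ∑ j, a i * b j * (Uᵀ * V) i j ^ 2 := by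
  have hcyc : trace (U * diagonal a * Uᵀ * (V * diagonal b * Vᵀ)) =
      trace (diagonal a * (Uᵀ * V) * diagonal b * (Uᵀ * V)ᵀ) := by
    rw [transpose_mul, transpose_transpose, Matrix.mul_assoc U, Matrix.mul_assoc U,
      trace_mul_comm U]
    simp only [Matrix.mul_assoc]
  rw [hcyc]
  simp only [trace, diag, mul_apply, diagonal_apply, transpose_apply, ite_mul, zero_mul,
    mul_ite, mul_zero, Finset.sum_ite_eq', Finset.sum_ite_eq, Finset.mem_univ, if_true]
  exact Finset.sum_congr rfl fun i _ => Finset.sum_congr rfl fun j _ => by ring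

lemma sum_sq_apply_eq_one_of_mul_transpose_self {W : Matrix n n R} (hW : W * Wᵀ = 1) (i : n) :
    ∑ j, W i j ^ 2 = 1 := by
  simpa [mul_apply, sq] using congr_fun₂ hW i i

lemma sum_sq_apply_eq_one_of_transpose_mul_self {W : Matrix n n R} (hW : Wᵀ * W = 1) (j : n) :
    ∑ i, W i j ^ 2 = 1 := by
  simpa [mul_apply, sq] using congr_fun₂ hW j j

lemma trace_sub_conj_diagonal_mul_sub_conj_diagonal {U V : Matrix n n R} (hU : Uᵀ * U = 1)
    (hV : Vᵀ * V = 1) (a b c d : n → R) :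
    trace ((U * diagonal a * Uᵀ - V * diagonal b * Vᵀ) *
        (U * diagonal c * Uᵀ - V * diagonal d * Vᵀ)) =
      ∑ i, ∑ j, (a i - b j) * (c i - d j) * (Uᵀ * V) i j ^ 2 := by
  set W := Uᵀ * V with hW_def
  have hWW : W * Wᵀ = 1 := by
    rw [hW_def, transpose_mul, transpose_transpose, Matrix.mul_assoc, ← Matrix.mul_assoc V,
      mul_eq_one_comm.mp hV, Matrix.one_mul, hU]
  have hWW' : Wᵀ * W = 1 := mul_eq_one_comm.mp hWW
  have hVU : Vᵀ * U = Wᵀ := by rw [hW_def, transpose_mul, transpose_transpose]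
  have hdiag (f : n → n → R) : ∑ i, ∑ j, f i j * (1 : Matrix n n R) i j ^ 2 = ∑ i, f i i := by
    simp [one_apply]
  rw [Matrix.sub_mul, Matrix.mul_sub, Matrix.mul_sub, trace_sub, trace_sub, trace_sub]
  simp only [trace_conj_diagonal_mul_conj_diagonal, hU, hV, hVU, hdiag, transpose_apply]
  have hrow : ∑ i, a i * c i = ∑ i, ∑ j, a i * c i * W i j ^ 2 := by
    simp_rw [← Finset.mul_sum, sum_sq_apply_eq_one_of_mul_transpose_self hWW, mul_one]
  have hcol : ∑ j, b j * d j = ∑ i, ∑ j, b j * d j * W i j ^ 2 := by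
    rw [Finset.sum_comm]
    simp_rw [← Finset.mul_sum, sum_sq_apply_eq_one_of_transpose_mul_self hWW', mul_one]
  rw [← hW_def, hrow, hcol, Finset.sum_comm (γ := n) (f := fun j i => b j * c i * W i j ^ 2)]
  simp only [← Finset.sum_sub_distrib]
  exact Finset.sum_congr rfl fun i _ => Finset.sum_congr rfl fun j _ => by ring

namespace IsHermitian

variable {A B : Matrix n n ℝ}

lemma transpose_eigenvectorUnitary_mul_self (hA : A.IsHermitian) :
    (hA.eigenvectorUnitary : Matrix n n ℝ)ᵀ * hA.eigenvectorUnitary = 1 := by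
  simpa [star_eq_conjTranspose] using Unitary.star_mul_self_of_mem hA.eigenvectorUnitary.2

lemma cfc_eq_conj_diagonal (hA : A.IsHermitian) (f : ℝ → ℝ) :
    cfc f A = hA.eigenvectorUnitary * diagonal (f ∘ hA.eigenvalues) *
      (hA.eigenvectorUnitary : Matrix n n ℝ)ᵀ := by
  simp [hA.cfc_eq, IsHermitian.cfc, Unitary.conjStarAlgAut_apply, star_eq_conjTranspose]

lemma exp_eq_cfc (hA : A.IsHermitian) : NormedSpace.exp A = cfc Real.exp A := by
  set U : Matrix n n ℝ := (hA.eigenvectorUnitary : Matrix n n ℝ)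
  have hU : U⁻¹ = Uᵀ := inv_eq_left_inv hA.transpose_eigenvectorUnitary_mul_self
  conv_lhs =>
    rw [← cfc_id' ℝ A, hA.cfc_eq_conj_diagonal, ← hU, exp_conj _ _ Unitary.isUnit_coe,
      exp_diagonal]
  rw [hA.cfc_eq_conj_diagonal, hU, Pi.exp_def, Real.exp_eq_exp_ℝ]
  rfl

lemma trace_sub_cfc_mul_sub_cfc (hA : A.IsHermitian) (hB : B.IsHermitian) (f g : ℝ → ℝ) :
    trace ((cfc f A - cfc f B) * (cfc g A - cfc g B)) =
      ∑ i, ∑ j, (f (hA.eigenvalues i) - f (hB.eigenvalues j)) *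
        (g (hA.eigenvalues i) - g (hB.eigenvalues j)) *
        ((hA.eigenvectorUnitary : Matrix n n ℝ)ᵀ * hB.eigenvectorUnitary) i j ^ 2 := by
  simp only [hA.cfc_eq_conj_diagonal, hB.cfc_eq_conj_diagonal]
  exact trace_sub_conj_diagonal_mul_sub_conj_diagonal
    hA.transpose_eigenvectorUnitary_mul_self hB.transpose_eigenvectorUnitary_mul_self _ _ _ _

end IsHermitian

end Matrix

theorem log_strictly_Hilbert_monotone_general
    (B₁ B₂ X₁ X₂ : M3) (hne : B₁ ≠ B₂)
    (hX₁ : X₁.IsSymm) (hX₂ : X₂.IsSymm)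
    (hexp₁ : NormedSpace.exp X₁ = B₁) (hexp₂ : NormedSpace.exp X₂ = B₂) :
    0 < Matrix.trace ((X₁ - X₂) * (B₁ - B₂)ᵀ) := by
  have hA₁ : X₁.IsHermitian := isHermitian_iff_isSymm.mpr hX₁
  have hA₂ : X₂.IsHermitian := isHermitian_iff_isSymm.mpr hX₂
  have hB : (B₁ - B₂)ᵀ = B₁ - B₂ := by
    rw [transpose_sub, ← hexp₁, ← hexp₂, ← exp_transpose, ← exp_transpose, hX₁.eq, hX₂.eq]
  have hX : trace ((X₁ - X₂) * (X₁ - X₂)) ≠ 0 := by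
    have hX₁₂ : X₁ - X₂ ≠ 0 := sub_ne_zero.2 (by rintro rfl; exact hne (hexp₁.symm.trans hexp₂))
    simpa only [(hA₁.sub hA₂).eq] using trace_mul_conjTranspose_self_eq_zero_iff.not.2 hX₁₂
  have hXX := hA₁.trace_sub_cfc_mul_sub_cfc hA₂ (fun x => x) (fun x => x)
  have hXB := hA₁.trace_sub_cfc_mul_sub_cfc hA₂ (fun x => x) Real.exp
  rw [cfc_id' ℝ X₁, cfc_id' ℝ X₂] at hXX hXB
  rw [hB, ← hexp₁, ← hexp₂, hA₁.exp_eq_cfc, hA₂.exp_eq_cfc, hXB]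
  rw [hXX] at hX
  exact Real.exp_strictMono.sum_sub_mul_sub_pos _ _ (fun _ _ => sq_nonneg _) hX

/-- Strict Hilbert-monotonicity of the matrix logarithm: if
`B₁, B₂ ∈ Sym⁺⁺(3)` are distinct, and `X₁, X₂` are the (symmetric) matrix logarithms of
`B₁, B₂` (i.e. `Xᵢ ∈ Sym(3)` with `exp Xᵢ = Bᵢ`), then
`⟨log B₁ − log B₂, B₁ − B₂⟩ > 0` in the Frobenius inner product. -/
theorem log_strictly_Hilbert_monotone
    (B₁ B₂ X₁ X₂ : M3) (hB₁ : B₁.PosDef) (hB₂ : B₂.PosDef) (hne : B₁ ≠ B₂)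
    (hX₁ : X₁.IsSymm) (hX₂ : X₂.IsSymm)
    (hexp₁ : NormedSpace.exp X₁ = B₁) (hexp₂ : NormedSpace.exp X₂ = B₂) :
    0 < Matrix.trace ((X₁ - X₂) * (B₁ - B₂)ᵀ) :=
  log_strictly_Hilbert_monotone_general B₁ B₂ X₁ X₂ hne hX₁ hX₂ hexp₁ hexp₂
end
end

section
/- Let B ∈ Sym⁺⁺(3) and let L : Sym(3) → Sym(3) be the Fréchet derivative at B of the matrix logarithm log : Sym⁺⁺(3) → Sym(3). Then for every D ∈ Sym(3) one has tr(L(B D + D B)) = 2 tr(D), even though L(B D + D B) ≠ 2 D in general. -/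
/-!
Since `det (exp X) = exp (tr X)` for symmetric `X`, the identity `tr ∘ log = log ∘ det` holds on
positive definite matrices. The line `B + t H`, `H = B D + D B`, stays positive definite for
small `t`, so differentiating along it at `t = 0` and using Jacobi's formula gives
`tr (L H) = tr (B⁻¹ H) = 2 tr D`.
-/

open Matrix

noncomputable section

open scoped Classical

attribute [local instance] Matrix.frobeniusNormedAddCommGroup Matrix.frobeniusNormedSpace

/-- The principal matrix logarithm on `Sym⁺⁺(3)`: for positive definite symmetric `B`,
`matrixLog B` is the unique symmetric matrix `X` with `exp X = B` (junk value otherwise). -/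
noncomputable def matrixLog (B : M3) : M3 :=
  if h : ∃ X : M3, X.IsSymm ∧ NormedSpace.exp X = B then h.choose else 0

open Filter Topology

theorem HasFDerivWithinAt.hasDerivAt_comp_add_smul {𝕜 E F : Type*} [NontriviallyNormedField 𝕜]
    [NormedAddCommGroup E] [NormedSpace 𝕜 E] [NormedAddCommGroup F] [NormedSpace 𝕜 F]
    {f : E → F} {L : E →L[𝕜] F} {s : Set E} {x v : E} (hf : HasFDerivWithinAt f L s x)
    (hs : ∀ᶠ t in 𝓝 (0 : 𝕜), x + t • v ∈ s) :
    HasDerivAt (fun t : 𝕜 ↦ f (x + t • v)) (L v) 0 := by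
  have hline : HasDerivAt (fun t : 𝕜 ↦ x + t • v) v 0 := by
    simpa using ((hasDerivAt_id (0 : 𝕜)).smul_const v).const_add x
  have hf' : HasFDerivWithinAt f L s (x + (0 : 𝕜) • v) := by simpa using hf
  exact (hf'.comp_hasDerivWithinAt (0 : 𝕜) hline.hasDerivWithinAt fun _ ↦ id).hasDerivAt hs

namespace Matrix

variable {n : Type*} [Fintype n]

theorem PosDef.eventually_add_smul {B H : Matrix n n ℝ} (hB : B.PosDef) (hH : H.IsHermitian) :
    ∀ᶠ t in 𝓝 (0 : ℝ), (B + t • H).PosDef := by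
  have hsphere : ∀ᶠ t in 𝓝 (0 : ℝ), ∀ u ∈ Metric.sphere (0 : n → ℝ) 1,
      0 < u ⬝ᵥ (B + t • H) *ᵥ u := by
    refine (isCompact_sphere _ _).eventually_forall_of_forall_eventually fun u hu ↦ ?_
    have hcont : Continuous fun z : ℝ × (n → ℝ) ↦ z.2 ⬝ᵥ (B + z.1 • H) *ᵥ z.2 := by
      fun_prop
    have hu0 : u ≠ 0 := ne_zero_of_mem_unit_sphere ⟨u, hu⟩
    refine continuousAt_const.eventually_lt hcont.continuousAt ?_
    simpa using hB.dotProduct_mulVec_pos hu0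
  filter_upwards [hsphere] with t ht
  refine .of_dotProduct_mulVec_pos (hB.1.add (hH.smul (IsSelfAdjoint.all t))) fun x hx ↦ ?_
  have hx_norm : 0 < ‖x‖ := norm_pos_iff.mpr hx
  have hu : ‖x‖⁻¹ • x ∈ Metric.sphere (0 : n → ℝ) 1 := by
    simp [norm_smul, hx_norm.ne']
  have hscale : x = ‖x‖ • (‖x‖⁻¹ • x) := by rw [smul_smul, mul_inv_cancel₀ hx_norm.ne', one_smul]
  have hu_pos := ht _ hu
  rw [star_trivial, hscale, mulVec_smul, smul_dotProduct, dotProduct_smul, smul_eq_mul,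
    smul_eq_mul]
  exact mul_pos hx_norm (mul_pos hx_norm hu_pos)

variable [DecidableEq n]

theorem exp_unitary_conj (U : unitaryGroup n ℝ) (A : Matrix n n ℝ) :
    NormedSpace.exp ((U : Matrix n n ℝ) * A * star (U : Matrix n n ℝ)) =
      U * NormedSpace.exp A * star (U : Matrix n n ℝ) := by
  rw [← inv_eq_right_inv (Unitary.mul_star_self_of_mem U.2), exp_conj _ _ Unitary.isUnit_coe]

theorem IsHermitian.eq_unitary_conj_diagonal {A : Matrix n n ℝ} (hA : A.IsHermitian) :
    A = hA.eigenvectorUnitary * diagonal hA.eigenvalues *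
      star (hA.eigenvectorUnitary : Matrix n n ℝ) := by
  simpa using hA.spectral_theorem

theorem IsHermitian.det_exp {A : Matrix n n ℝ} (hA : A.IsHermitian) :
    (NormedSpace.exp A).det = Real.exp A.trace := by
  rw [hA.eq_unitary_conj_diagonal, exp_unitary_conj, exp_diagonal, det_mul_right_comm,
    Unitary.mul_star_self_of_mem (Subtype.prop _), one_mul, det_diagonal, trace_mul_cycle,
    Unitary.star_mul_self_of_mem (Subtype.prop _), one_mul, trace_diagonal, Real.exp_sum]
  simp [Real.exp_eq_exp_ℝ]

theorem PosDef.exists_isSymm_exp_eq {B : Matrix n n ℝ} (hB : B.PosDef) :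
    ∃ X : Matrix n n ℝ, X.IsSymm ∧ NormedSpace.exp X = B := by
  set U := hB.1.eigenvectorUnitary
  refine ⟨U * diagonal (fun i ↦ Real.log (hB.1.eigenvalues i)) * star (U : Matrix n n ℝ), ?_, ?_⟩
  · rw [← isHermitian_iff_isSymm, star_eq_conjTranspose]
    exact isHermitian_mul_mul_conjTranspose _ (isHermitian_diagonal _)
  · rw [exp_unitary_conj, exp_diagonal]
    conv_rhs => rw [hB.1.eq_unitary_conj_diagonal]
    congr
    ext i
    simp [← Real.exp_eq_exp_ℝ, Real.exp_log (hB.eigenvalues_pos i)]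

theorem hasDerivAt_det_one_add_smul {𝕜 : Type*} [NontriviallyNormedField 𝕜] (A : Matrix n n 𝕜) :
    HasDerivAt (fun t : 𝕜 ↦ (1 + t • A).det) A.trace 0 := by
  set q := (det (1 + (Polynomial.X : Polynomial 𝕜) • A.map Polynomial.C)).divX.divX
  have hexp : (fun t : 𝕜 ↦ (1 + t • A).det) = fun t ↦ 1 + A.trace * t + q.eval t * t ^ 2 :=
    funext fun t ↦ det_one_add_smul t A
  rw [hexp]
  have := (((hasDerivAt_id (0 : 𝕜)).const_mul A.trace).const_add 1).fun_add
    ((q.hasDerivAt 0).fun_mul (hasDerivAt_pow 2 (0 : 𝕜)))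
  simpa using this

theorem hasDerivAt_log_det_add_smul {B : Matrix n n ℝ} (hB : IsUnit B.det) (H : Matrix n n ℝ) :
    HasDerivAt (fun t : ℝ ↦ Real.log (B + t • H).det) (B⁻¹ * H).trace 0 := by
  have hfactor : ∀ t : ℝ, B + t • H = B * (1 + t • (B⁻¹ * H)) := fun t ↦ by
    rw [mul_add, mul_one, mul_smul_comm, ← mul_assoc, mul_nonsing_inv B hB, one_mul]
  simp_rw [hfactor, det_mul]
  have := ((hasDerivAt_det_one_add_smul (B⁻¹ * H)).const_mul B.det).log
    (by simpa using hB.ne_zero)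
  simpa [hB.ne_zero] using this

theorem trace_inv_mul_mul_add_mul {R : Type*} [CommRing R] {B : Matrix n n R}
    (hB : IsUnit B.det) (D : Matrix n n R) :
    (B⁻¹ * (B * D + D * B)).trace = 2 * D.trace := by
  rw [mul_add, ← mul_assoc, nonsing_inv_mul B hB, one_mul, trace_add, ← mul_assoc, trace_mul_cycle,
    mul_nonsing_inv B hB, one_mul, two_mul]

end Matrix

theorem trace_matrixLog {B : M3} (hB : B.PosDef) : (matrixLog B).trace = Real.log B.det := by
  have hex := hB.exists_isSymm_exp_eq
  obtain ⟨hsymm, hexp⟩ := hex.choose_spec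
  rw [matrixLog, dif_pos hex, ← Real.log_exp (trace _),
    ← (isHermitian_iff_isSymm.mpr hsymm).det_exp, hexp]

/-- If `L` is the Fréchet derivative at `B ∈ Sym⁺⁺(3)` of the matrix
logarithm, then `tr(L(B D + D B)) = 2 tr(D)` for every `D ∈ Sym(3)`. -/
theorem log_fderiv_BD_DB_trace (B : M3) (hB : B.PosDef)
    (L : M3 →L[ℝ] M3)
    (hL : HasFDerivWithinAt matrixLog L {X : M3 | X.PosDef} B) :
    ∀ D : M3, D.IsSymm →
      Matrix.trace (L (B * D + D * B)) = 2 * Matrix.trace D := by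
  intro D hD
  set H := B * D + D * B
  have hH : H.IsHermitian := by
    have hB' : B.IsSymm := isHermitian_iff_isSymm.mp hB.1
    rw [isHermitian_iff_isSymm, IsSymm, transpose_add, transpose_mul, transpose_mul, hB'.eq, hD.eq,
      add_comm]
  have hline := hB.eventually_add_smul hH
  have hdet : IsUnit B.det := hB.det_pos.ne'.isUnit
  have htrace_log : HasDerivAt (fun t : ℝ ↦ (matrixLog (B + t • H)).trace) (L H).trace 0 :=
    ((traceLinearMap (Fin 3) ℝ ℝ).toContinuousLinearMap.hasFDerivAt.comp_hasFDerivWithinAt B hL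
      ).hasDerivAt_comp_add_smul hline
  have hagree : (fun t : ℝ ↦ (matrixLog (B + t • H)).trace) =ᶠ[𝓝 0]
      fun t ↦ Real.log (B + t • H).det :=
    hline.mono fun t ht ↦ trace_matrixLog ht
  calc (L H).trace = (B⁻¹ * H).trace :=
        (htrace_log.congr_of_eventuallyEq hagree.symm).unique (hasDerivAt_log_det_add_smul hdet H)
    _ = 2 * D.trace := trace_inv_mul_mul_add_mul hdet D
end
end

section
/- The exponentiated Hencky stress is Hilbert-monotone: fix μ > 0 and k ∈ ℝ, and define σ̂ : Sym(3) → Sym(3) by σ̂(X) = 2 μ exp(k ‖X‖²) exp(−tr X) X (scalar exponentials). If k ≥ 3/8 then ⟨σ̂(X₁) − σ̂(X₂), X₁ − X₂⟩ ≥ 0 for all X₁, X₂ ∈ Sym(3); if k > 3/8 then ⟨σ̂(X₁) − σ̂(X₂), X₁ − X₂⟩ > 0 for all X₁ ≠ X₂ in Sym(3). -/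
open Matrix

noncomputable section

/-- The Cauchy stress of the exponentiated Hencky energy:
`σ̂(X) = 2 μ e^{k ‖X‖²} e^{−tr X} X`, with `‖X‖² = tr(X Xᵀ)`. -/
noncomputable def expHenckyStress (μ k : ℝ) (X : M3) : M3 :=
  (2 * μ * Real.exp (k * Matrix.trace (X * Xᵀ)) * Real.exp (-Matrix.trace X)) • X

open Real

/-! Put `D = X₁ - X₂`, `c = ⟨X₂, D⟩`, `d = ‖D‖²`, `τ = tr D`. Along the segment `X₂ + tD` the
pairing `ψ(t) = ⟨σ̂(X₂ + tD), D⟩` is a positive multiple of `e^{k(2ct + dt²) - τt} (c + dt)`, and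
`⟨σ̂(X₁) - σ̂(X₂), D⟩ = ψ(1) - ψ(0)`. The derivative of `ψ` is a positive multiple of
`2k u² - τu + d` with `u = c + dt`, a quadratic in `u` of discriminant `τ² - 8kd`. By Cauchy–Schwarz
`τ² ≤ 3d`, so the discriminant is at most `(3 - 8k) d`: nonpositive for `k ≥ 3/8`, and negative for
`k > 3/8` and `D ≠ 0`. Hence `ψ` is monotone, resp. strictly monotone. -/

def expHenckyProfile (k c d τ t : ℝ) : ℝ :=
  exp (k * (2 * c * t + d * t ^ 2) - τ * t) * (c + d * t)

lemma hasDerivAt_expHenckyProfile (k c d τ t : ℝ) :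
    HasDerivAt (expHenckyProfile k c d τ)
      (exp (k * (2 * c * t + d * t ^ 2) - τ * t) *
        (2 * k * (c + d * t) ^ 2 - τ * (c + d * t) + d)) t := by
  have hexponent : HasDerivAt (fun t => k * (2 * c * t + d * t ^ 2) - τ * t)
      (2 * k * (c + d * t) - τ) t := by
    refine (((((hasDerivAt_id' t).const_mul (2 * c)).add
      ((hasDerivAt_pow 2 t).const_mul d)).const_mul k).sub
        ((hasDerivAt_id' t).const_mul τ)).congr_deriv ?_
    norm_num
    ring
  have hlinear : HasDerivAt (fun t => c + d * t) d t := by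
    simpa using ((hasDerivAt_id t).const_mul d).const_add c
  exact (hexponent.exp.mul hlinear).congr_deriv (by ring)

lemma quadratic_nonneg_of_sq_le {k d τ : ℝ} (hk : 0 < k) (hτ : τ ^ 2 ≤ 8 * k * d) (u : ℝ) :
    0 ≤ 2 * k * u ^ 2 - τ * u + d := by
  nlinarith [sq_nonneg (4 * k * u - τ)]

lemma quadratic_pos_of_sq_lt {k d τ : ℝ} (hk : 0 < k) (hτ : τ ^ 2 < 8 * k * d) (u : ℝ) :
    0 < 2 * k * u ^ 2 - τ * u + d := by
  nlinarith [sq_nonneg (4 * k * u - τ)]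

lemma monotone_expHenckyProfile {k c d τ : ℝ} (hk : 0 < k) (hτ : τ ^ 2 ≤ 8 * k * d) :
    Monotone (expHenckyProfile k c d τ) :=
  monotone_of_deriv_nonneg
    (fun t => (hasDerivAt_expHenckyProfile k c d τ t).differentiableAt) fun t => by
      rw [(hasDerivAt_expHenckyProfile k c d τ t).deriv]
      exact mul_nonneg (exp_pos _).le (quadratic_nonneg_of_sq_le hk hτ _)

lemma strictMono_expHenckyProfile {k c d τ : ℝ} (hk : 0 < k) (hτ : τ ^ 2 < 8 * k * d) :
    StrictMono (expHenckyProfile k c d τ) :=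
  strictMono_of_deriv_pos fun t => by
    rw [(hasDerivAt_expHenckyProfile k c d τ t).deriv]
    exact mul_pos (exp_pos _) (quadratic_pos_of_sq_lt hk hτ _)

section Frobenius

variable {m n : Type*} [Fintype m] [Fintype n]

lemma trace_mul_transpose_comm (A B : Matrix m n ℝ) : trace (A * Bᵀ) = trace (B * Aᵀ) := by
  rw [← trace_transpose, transpose_mul, transpose_transpose]

lemma trace_mul_transpose_self_nonneg (A : Matrix m n ℝ) : 0 ≤ trace (A * Aᵀ) := by
  simpa using (posSemidef_self_mul_conjTranspose A).trace_nonneg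

lemma trace_mul_transpose_self_pos {A : Matrix m n ℝ} (hA : A ≠ 0) : 0 < trace (A * Aᵀ) :=
  (trace_mul_transpose_self_nonneg A).lt_of_ne' <| by
    simpa using trace_mul_conjTranspose_self_eq_zero_iff.not.2 hA

lemma trace_sq_le_card_mul_trace_mul_transpose (A : Matrix n n ℝ) :
    trace A ^ 2 ≤ Fintype.card n * trace (A * Aᵀ) := by
  have hdiag : ∑ i, A i i ^ 2 ≤ trace (A * Aᵀ) := by
    simp only [trace, diag, mul_apply, transpose_apply, ← sq]
    exact Finset.sum_le_sum fun i _ =>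
      Finset.single_le_sum (f := fun j => A i j ^ 2) (fun j _ => sq_nonneg _) (Finset.mem_univ i)
  calc trace A ^ 2 = (∑ i, A i i) ^ 2 := rfl
    _ ≤ Fintype.card n * ∑ i, A i i ^ 2 := sq_sum_le_card_mul_sum_sq
    _ ≤ Fintype.card n * trace (A * Aᵀ) := by gcongr

end Frobenius

lemma trace_expHenckyStress_add_smul_mul_transpose (μ k : ℝ) (X D : M3) (t : ℝ) :
    trace (expHenckyStress μ k (X + t • D) * Dᵀ) =
      2 * μ * exp (k * trace (X * Xᵀ) - trace X) *
        expHenckyProfile k (trace (X * Dᵀ)) (trace (D * Dᵀ)) (trace D) t := by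
  have hnorm : trace ((X + t • D) * (X + t • D)ᵀ) =
      trace (X * Xᵀ) + 2 * t * trace (X * Dᵀ) + t ^ 2 * trace (D * Dᵀ) := by
    simp only [transpose_add, transpose_smul, add_mul, mul_add, smul_mul, Matrix.mul_smul,
      trace_add, trace_smul, smul_eq_mul, trace_mul_transpose_comm D X]
    ring
  have hexp : exp (k * (trace (X * Xᵀ) + 2 * t * trace (X * Dᵀ) + t ^ 2 * trace (D * Dᵀ))) *
      exp (-(trace X + t * trace D)) = exp (k * trace (X * Xᵀ) - trace X) *
        exp (k * (2 * trace (X * Dᵀ) * t + trace (D * Dᵀ) * t ^ 2) - trace D * t) := by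
    rw [← exp_add, ← exp_add]
    ring_nf
  rw [expHenckyStress, hnorm]
  simp only [expHenckyProfile, smul_mul, add_mul, trace_add, trace_smul, smul_eq_mul]
  rw [mul_assoc (2 * μ), hexp]
  ring

lemma trace_expHenckyStress_sub_mul_transpose (μ k : ℝ) (X D : M3) :
    trace ((expHenckyStress μ k (X + D) - expHenckyStress μ k X) * Dᵀ) =
      2 * μ * exp (k * trace (X * Xᵀ) - trace X) *
        (expHenckyProfile k (trace (X * Dᵀ)) (trace (D * Dᵀ)) (trace D) 1 -
          expHenckyProfile k (trace (X * Dᵀ)) (trace (D * Dᵀ)) (trace D) 0) := by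
  have hline := trace_expHenckyStress_add_smul_mul_transpose μ k X D
  rw [mul_sub, ← hline, ← hline, sub_mul, trace_sub, one_smul, zero_smul, add_zero]

/-- For `μ > 0`, the exponentiated Hencky stress
`σ̂(X) = 2 μ e^{k‖X‖²} e^{−tr X} X` is Hilbert-monotone on `Sym(3)` if `k ≥ 3/8`, and
strictly Hilbert-monotone if `k > 3/8`. -/
theorem expHencky_monotone (μ k : ℝ) (hμ : 0 < μ) :
    (3 / 8 ≤ k → ∀ X₁ X₂ : M3, X₁.IsSymm → X₂.IsSymm →
      0 ≤ Matrix.trace ((expHenckyStress μ k X₁ - expHenckyStress μ k X₂) *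
            (X₁ - X₂)ᵀ)) ∧
    (3 / 8 < k → ∀ X₁ X₂ : M3, X₁.IsSymm → X₂.IsSymm → X₁ ≠ X₂ →
      0 < Matrix.trace ((expHenckyStress μ k X₁ - expHenckyStress μ k X₂) *
            (X₁ - X₂)ᵀ)) := by
  have hpairing (X₁ X₂ : M3) := add_sub_cancel X₂ X₁ ▸
    trace_expHenckyStress_sub_mul_transpose μ k X₂ (X₁ - X₂)
  have htrace (D : M3) : trace D ^ 2 ≤ 3 * trace (D * Dᵀ) := by
    simpa using trace_sq_le_card_mul_trace_mul_transpose D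
  refine ⟨fun hk X₁ X₂ _ _ => ?_, fun hk X₁ X₂ _ _ hne => ?_⟩ <;> rw [hpairing] <;>
    set D := X₁ - X₂
  · have hτ : trace D ^ 2 ≤ 8 * k * trace (D * Dᵀ) := by
      nlinarith [htrace D, trace_mul_transpose_self_nonneg D]
    exact mul_nonneg (by positivity)
      (sub_nonneg.2 (monotone_expHenckyProfile (by linarith) hτ zero_le_one))
  · have hτ : trace D ^ 2 < 8 * k * trace (D * Dᵀ) := by
      nlinarith [htrace D, trace_mul_transpose_self_pos (sub_ne_zero.2 hne)]
    exact mul_pos (by positivity)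
      (sub_pos.2 (strictMono_expHenckyProfile (by linarith) hτ zero_lt_one))
end
end
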